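/- arXiv:2103.04018 — 7 statements merged into one kernel-verified Lean document; each statement's English description precedes it below -/
import Mathlib

section
/- For a linear phenylene chain with h hexagons (h ≥ 1), the Mostar index equals 72·⌊h/2⌋·⌈h/2⌉ − 24·⌊h/2⌋. -/
open Finset

/-- The Mostar index of the linear phenylene chain `L_h` with `h` hexagons,
computed via the cut method. -/
def MoL (h : ℕ) : ℤ :=
  24 * ∑ i ∈ Finset.Icc 1 h, |(h : ℤ) + 1 - 2 * (i : ℤ)| +
  12 * ∑ i ∈ Finset.Icc 1 (h - 1), |(h : ℤ) - 2 * (i : ℤ)|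

/-! Both cut sums of `MoL h` are `∑_{i=1}^{n} |n + 1 - 2i|`, for `n = h` and `n = h - 1`.
Removing the two extreme terms `i = 1` and `i = n + 2`, each equal to `n + 1`, from the sum for
`n + 2` leaves the sum for `n`; since `⌊n/2⌋ + ⌈n/2⌉ = n`, the closed form `2⌊n/2⌋⌈n/2⌉` obeys the
same recursion. -/

theorem sum_range_abs_sub_two_mul (n : ℕ) :
    ∑ i ∈ range n, |(n : ℤ) - 1 - 2 * i| = 2 * ((n / 2 : ℕ) : ℤ) * ((n + 1) / 2 : ℕ) := by
  induction n using Nat.twoStepInduction with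
  | zero => simp
  | one => simp
  | more n ih _ =>
    have middle : ∑ i ∈ range n, |((n + 2 : ℕ) : ℤ) - 1 - 2 * ((i + 1 : ℕ) : ℤ)|
        = ∑ i ∈ range n, |(n : ℤ) - 1 - 2 * i| :=
      sum_congr rfl fun i _ => by push_cast; ring_nf
    have last : |((n + 2 : ℕ) : ℤ) - 1 - 2 * ((n + 1 : ℕ) : ℤ)| = n + 1 := by
      push_cast; rw [abs_of_nonpos (by omega)]; ring
    have first : |((n + 2 : ℕ) : ℤ) - 1 - 2 * ((0 : ℕ) : ℤ)| = n + 1 := by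
      push_cast; rw [abs_of_nonneg (by omega)]; ring
    rw [sum_range_succ', sum_range_succ, middle, ih, last, first,
      show (n + 2) / 2 = n / 2 + 1 by omega, show (n + 2 + 1) / 2 = (n + 1) / 2 + 1 by omega]
    have halves : (n : ℤ) = ((n / 2 : ℕ) : ℤ) + ((n + 1) / 2 : ℕ) := by omega
    simp only [Nat.cast_add, Nat.cast_one]
    linear_combination 2 * halves

theorem sum_Icc_abs_add_one_sub_two_mul (n : ℕ) :
    ∑ i ∈ Icc 1 n, |(n : ℤ) + 1 - 2 * i| = 2 * ((n / 2 : ℕ) : ℤ) * ((n + 1) / 2 : ℕ) := by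
  rw [← sum_range_abs_sub_two_mul, ← Ico_add_one_right_eq_Icc, sum_Ico_eq_sum_range]
  refine sum_congr rfl fun i _ => ?_
  push_cast
  ring_nf

theorem mostar_linear_chain_general (h : ℕ) :
    MoL h = 72 * ((h / 2 : ℕ) : ℤ) * (((h + 1) / 2 : ℕ) : ℤ) - 24 * ((h / 2 : ℕ) : ℤ) := by
  cases h with
  | zero => simp [MoL]
  | succ m =>
    have second_sum : ∑ i ∈ Icc 1 m, |((m + 1 : ℕ) : ℤ) - 2 * i|
        = ∑ i ∈ Icc 1 m, |(m : ℤ) + 1 - 2 * i| := by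
      push_cast; rfl
    rw [MoL, Nat.add_sub_cancel, second_sum, sum_Icc_abs_add_one_sub_two_mul,
      sum_Icc_abs_add_one_sub_two_mul, show (m + 1 + 1) / 2 = m / 2 + 1 by omega]
    simp only [Nat.cast_add, Nat.cast_one]
    ring

/-- For a linear phenylene chain with `h ≥ 1` hexagons, the Mostar index equals
`72⌊h/2⌋⌈h/2⌉ − 24⌊h/2⌋`. -/
theorem mostar_linear_chain (h : ℕ) (hh : 1 ≤ h) :
    MoL h = 72 * ((h / 2 : ℕ) : ℤ) * (((h + 1) / 2 : ℕ) : ℤ) - 24 * ((h / 2 : ℕ) : ℤ) :=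
  mostar_linear_chain_general h
end

section
/- Let h, j, k, n be positive integers with 1 ≤ j ≤ k ≤ n, h = j+k+n+1, and n ≤ ⌊h/2⌋. Then Mo(P_L(j,k,n)) := 24·(2kj + 3nj + 4kn + k + 2n) equals 6·[2(j+1)(n−k) + 2(k+1)(n−j) + 2(n+1)(k−j) + 4∑_{i=1}^{j}(h+1−2i) + 4∑_{i=1}^{k}(h+1−2i) + 4∑_{i=1}^{n}(h+1−2i) + 2∑_{i=1}^{j}(h−2i) + 2∑_{i=1}^{k}(h−2i) + 2∑_{i=1}^{n}(h−2i)]. -/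
open Finset

theorem sum_Icc_one_sub_two_mul {R : Type*} [CommRing R] (c : R) (m : ℕ) :
    ∑ i ∈ Icc 1 m, (c - 2 * (i : R)) = m * c - m * (m + 1) := by
  induction m with
  | zero => simp
  | succ m ih =>
    rw [sum_Icc_succ_top (by omega), ih]
    push_cast
    ring

theorem mostar_PL_small_n_general (j k n h : ℕ) (hh : h = j + k + n + 1) :
    (24 : ℤ) * (2 * k * j + 3 * n * j + 4 * k * n + k + 2 * n) =
      6 * (2 * ((j : ℤ) + 1) * ((n : ℤ) - (k : ℤ)) +
           2 * ((k : ℤ) + 1) * ((n : ℤ) - (j : ℤ)) +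
           2 * ((n : ℤ) + 1) * ((k : ℤ) - (j : ℤ)) +
           4 * ∑ i ∈ Finset.Icc 1 j, ((h : ℤ) + 1 - 2 * (i : ℤ)) +
           4 * ∑ i ∈ Finset.Icc 1 k, ((h : ℤ) + 1 - 2 * (i : ℤ)) +
           4 * ∑ i ∈ Finset.Icc 1 n, ((h : ℤ) + 1 - 2 * (i : ℤ)) +
           2 * ∑ i ∈ Finset.Icc 1 j, ((h : ℤ) - 2 * (i : ℤ)) +
           2 * ∑ i ∈ Finset.Icc 1 k, ((h : ℤ) - 2 * (i : ℤ)) +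
           2 * ∑ i ∈ Finset.Icc 1 n, ((h : ℤ) - 2 * (i : ℤ))) := by
  simp only [sum_Icc_one_sub_two_mul]
  subst hh
  push_cast
  ring

/-- Cut-method identity for `Mo(P_L(j,k,n))` when `n ≤ ⌊h/2⌋`, `h = j+k+n+1`. -/
theorem mostar_PL_small_n (j k n h : ℕ) (hj : 1 ≤ j) (hjk : j ≤ k) (hkn : k ≤ n)
    (hh : h = j + k + n + 1) (hn : n ≤ h / 2) :
    (24 : ℤ) * (2 * k * j + 3 * n * j + 4 * k * n + k + 2 * n) =
      6 * (2 * ((j : ℤ) + 1) * ((n : ℤ) - (k : ℤ)) +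
           2 * ((k : ℤ) + 1) * ((n : ℤ) - (j : ℤ)) +
           2 * ((n : ℤ) + 1) * ((k : ℤ) - (j : ℤ)) +
           4 * ∑ i ∈ Finset.Icc 1 j, ((h : ℤ) + 1 - 2 * (i : ℤ)) +
           4 * ∑ i ∈ Finset.Icc 1 k, ((h : ℤ) + 1 - 2 * (i : ℤ)) +
           4 * ∑ i ∈ Finset.Icc 1 n, ((h : ℤ) + 1 - 2 * (i : ℤ)) +
           2 * ∑ i ∈ Finset.Icc 1 j, ((h : ℤ) - 2 * (i : ℤ)) +
           2 * ∑ i ∈ Finset.Icc 1 k, ((h : ℤ) - 2 * (i : ℤ)) +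
           2 * ∑ i ∈ Finset.Icc 1 n, ((h : ℤ) - 2 * (i : ℤ))) :=
  mostar_PL_small_n_general j k n h hh
end

section
/- Let h, j, k, n be positive integers with 1 ≤ j ≤ k ≤ n, h = j+k+n+1 odd, and n ≥ ⌊h/2⌋ + 1. Then the Mostar index of P_L(j,k,n) equals 6·(4j + 3j² + 8k + 3k² + 4n + 3n² + 14kj + 6jn + 10kn). -/
open Finset

/-- The Mostar index of the tree-like phenylene `P_L(j,k,n)` (one full-hexagon with three
linear branches of lengths `j`, `k`, `n`), computed via the cut method. -/
def MoPL (j k n : ℕ) : ℤ :=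
  let h : ℕ := j + k + n + 1
  6 * (2 * ((j : ℤ) + 1) * ((n : ℤ) - (k : ℤ)) +
       2 * ((k : ℤ) + 1) * ((n : ℤ) - (j : ℤ)) +
       2 * ((n : ℤ) + 1) * ((k : ℤ) - (j : ℤ)) +
       4 * ∑ i ∈ Finset.Icc 1 j, ((h : ℤ) + 1 - 2 * (i : ℤ)) +
       4 * ∑ i ∈ Finset.Icc 1 k, ((h : ℤ) + 1 - 2 * (i : ℤ)) +
       4 * ∑ i ∈ Finset.Icc 1 n, |(h : ℤ) + 1 - 2 * (i : ℤ)| +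
       2 * ∑ i ∈ Finset.Icc 1 j, ((h : ℤ) - 2 * (i : ℤ)) +
       2 * ∑ i ∈ Finset.Icc 1 k, ((h : ℤ) - 2 * (i : ℤ)) +
       2 * ∑ i ∈ Finset.Icc 1 n, |(h : ℤ) - 2 * (i : ℤ)|)

lemma sum_Icc_sub_two_mul (c : ℤ) (N : ℕ) :
    ∑ i ∈ Icc 1 N, (c - 2 * (i : ℤ)) = c * N - N * (N + 1) := by
  induction N with
  | zero => simp
  | succ N ih =>
    rw [sum_Icc_succ_top (by omega), ih]
    push_cast
    ring

lemma sum_Icc_abs_sub_two_mul (c : ℤ) {a N : ℕ} (haN : a ≤ N) (hlo : 2 * (a : ℤ) ≤ c)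
    (hhi : c ≤ 2 * (a : ℤ) + 2) :
    ∑ i ∈ Icc 1 N, |c - 2 * (i : ℤ)| = 2 * (c * a - a * (a + 1)) + N * (N + 1) - c * N := by
  induction N, haN using Nat.le_induction with
  | base =>
    have hterm : ∀ i ∈ Icc 1 a, |c - 2 * (i : ℤ)| = c - 2 * i := fun i hi => by
      have : (i : ℤ) ≤ a := by exact_mod_cast (mem_Icc.mp hi).2
      exact abs_of_nonneg (by linarith)
    rw [sum_congr rfl hterm, sum_Icc_sub_two_mul]
    ring
  | succ N haN ih =>
    have hterm : |c - 2 * ((N + 1 : ℕ) : ℤ)| = 2 * (N + 1) - c := by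
      have : (a : ℤ) ≤ N := by exact_mod_cast haN
      rw [abs_of_nonpos (by push_cast; linarith)]
      push_cast
      ring
    rw [sum_Icc_succ_top (by omega), ih, hterm]
    push_cast
    ring

theorem mostar_PL_large_n_odd_general (j k n h : ℕ)
    (hh : h = j + k + n + 1) (hodd : Odd h) (hn : h / 2 + 1 ≤ n) :
    MoPL j k n =
      6 * (4 * (j : ℤ) + 3 * (j : ℤ) ^ 2 + 8 * (k : ℤ) + 3 * (k : ℤ) ^ 2 + 4 * (n : ℤ) +
           3 * (n : ℤ) ^ 2 + 14 * (k : ℤ) * (j : ℤ) + 6 * (j : ℤ) * (n : ℤ) +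
           10 * (k : ℤ) * (n : ℤ)) := by
  obtain ⟨t, rfl⟩ := hodd
  have hsum : (j + k + n : ℤ) = 2 * t := by exact_mod_cast (by omega : j + k + n = 2 * t)
  have htn : t + 1 ≤ n := by omega
  -- `h + 1 = 2 (t + 1)` and `h = 2 t + 1`: the absolute values change sign after `t + 1`, resp. `t`
  simp only [MoPL]
  rw [sum_Icc_sub_two_mul, sum_Icc_sub_two_mul, sum_Icc_sub_two_mul, sum_Icc_sub_two_mul,
    sum_Icc_abs_sub_two_mul _ htn (by push_cast; omega) (by push_cast; omega),
    sum_Icc_abs_sub_two_mul _ (by omega : t ≤ n) (by push_cast; omega) (by push_cast; omega)]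
  push_cast
  linear_combination (24 - 18 * (j + k + n : ℤ) + 36 * t) * hsum

/-- For `h = j+k+n+1` odd and `n ≥ ⌊h/2⌋ + 1`, the Mostar index of `P_L(j,k,n)` equals
`6(4j + 3j² + 8k + 3k² + 4n + 3n² + 14kj + 6jn + 10kn)`. -/
theorem mostar_PL_large_n_odd (j k n h : ℕ) (hj : 1 ≤ j) (hjk : j ≤ k) (hkn : k ≤ n)
    (hh : h = j + k + n + 1) (hodd : Odd h) (hn : h / 2 + 1 ≤ n) :
    MoPL j k n =
      6 * (4 * (j : ℤ) + 3 * (j : ℤ) ^ 2 + 8 * (k : ℤ) + 3 * (k : ℤ) ^ 2 + 4 * (n : ℤ) +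
           3 * (n : ℤ) ^ 2 + 14 * (k : ℤ) * (j : ℤ) + 6 * (j : ℤ) * (n : ℤ) +
           10 * (k : ℤ) * (n : ℤ)) :=
  mostar_PL_large_n_odd_general j k n h hh hodd hn
end

section
/- Let k ≥ 2, n, s, t, o be nonnegative integers with o ≥ 2, n = o/2 + t + s (o even), s ≤ t, and n ≥ k−1. Define φ₁ = 6·(2(n−k+1) + 2kn + (o+2)·|(t−s)−(k−1)|) and φ₂ = 6·(4(n−k+1) + (o+2k)·(t−s)). Then φ₂ ≤ φ₁, with equality if and only if t−s ≥ k−1 and s = 0. -/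
/-!
With `2n = o + 2t + 2s` the difference `φ₁ − φ₂` is the ring identity
`6 (4 s (k − 1) + (o + 2) (|x| − x))` where `x = (t − s) − (k − 1)`.
Both summands are nonnegative, so `φ₂ ≤ φ₁`, and equality forces `s (k − 1) = 0` and `|x| = x`.
-/

namespace PhenyleneChain

def phi1 (k n s t o : ℤ) : ℤ :=
  6 * (2 * (n - k + 1) + 2 * k * n + (o + 2) * |(t - s) - (k - 1)|)

def phi2 (k n s t o : ℤ) : ℤ :=
  6 * (4 * (n - k + 1) + (o + 2 * k) * (t - s))

variable {k n s t o : ℤ}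

theorem phi1_sub_phi2 (hn : 2 * n = o + 2 * t + 2 * s) :
    phi1 k n s t o - phi2 k n s t o =
      6 * (4 * s * (k - 1) + (o + 2) * (|t - s - (k - 1)| - (t - s - (k - 1)))) := by
  unfold phi1 phi2
  linear_combination 6 * (k - 1) * hn

theorem phi2_le_phi1 (hn : 2 * n = o + 2 * t + 2 * s) (hk : 1 ≤ k) (hs : 0 ≤ s) (ho : 0 ≤ o) :
    phi2 k n s t o ≤ phi1 k n s t o := by
  have hgap := phi1_sub_phi2 (k := k) hn
  have habs := le_abs_self (t - s - (k - 1))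
  linarith [mul_nonneg hs (sub_nonneg.2 hk), mul_nonneg (by linarith : (0 : ℤ) ≤ o + 2)
    (sub_nonneg.2 habs)]

theorem phi2_eq_phi1_iff (hn : 2 * n = o + 2 * t + 2 * s) (hk : 1 < k) (hs : 0 ≤ s)
    (ho : 0 ≤ o) : phi2 k n s t o = phi1 k n s t o ↔ k - 1 ≤ t - s ∧ s = 0 := by
  have hk' : 0 < k - 1 := by linarith
  have ho' : 0 < o + 2 := by linarith
  have hsk : 0 ≤ 4 * s * (k - 1) := by positivity
  have hx : 0 ≤ (o + 2) * (|t - s - (k - 1)| - (t - s - (k - 1))) :=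
    mul_nonneg ho'.le (sub_nonneg.2 (le_abs_self _))
  rw [eq_comm, ← sub_eq_zero, phi1_sub_phi2 hn, mul_eq_zero, or_iff_right (by norm_num),
    add_eq_zero_iff_of_nonneg hsk hx]
  simp [hk'.ne', ho'.ne', sub_eq_zero, abs_eq_self, and_comm]

end PhenyleneChain

open PhenyleneChain in
/-- Key comparison of Lemma 3.1(1): `φ₂ ≤ φ₁`, with equality iff `t−s ≥ k−1` and `s = 0`. -/
theorem phi2_le_phi1 (k n s t o : ℕ) (hk : 2 ≤ k) (hoe : Even o)
    (hn : n = o / 2 + t + s) :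
    6 * (4 * ((n : ℤ) - (k : ℤ) + 1) + ((o : ℤ) + 2 * (k : ℤ)) * ((t : ℤ) - (s : ℤ))) ≤
      6 * (2 * ((n : ℤ) - (k : ℤ) + 1) + 2 * (k : ℤ) * (n : ℤ) +
        ((o : ℤ) + 2) * |((t : ℤ) - (s : ℤ)) - ((k : ℤ) - 1)|) ∧
    (6 * (4 * ((n : ℤ) - (k : ℤ) + 1) + ((o : ℤ) + 2 * (k : ℤ)) * ((t : ℤ) - (s : ℤ))) =
      6 * (2 * ((n : ℤ) - (k : ℤ) + 1) + 2 * (k : ℤ) * (n : ℤ) +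
        ((o : ℤ) + 2) * |((t : ℤ) - (s : ℤ)) - ((k : ℤ) - 1)|) ↔
      ((k : ℤ) - 1 ≤ (t : ℤ) - (s : ℤ) ∧ s = 0)) := by
  have h2n : 2 * (n : ℤ) = o + 2 * t + 2 * s := by
    have := Nat.two_mul_div_two_of_even hoe
    omega
  have hk' : (1 : ℤ) < k := by omega
  have hs : (0 : ℤ) ≤ s := s.cast_nonneg
  have ho : (0 : ℤ) ≤ o := o.cast_nonneg
  refine ⟨PhenyleneChain.phi2_le_phi1 h2n hk'.le hs ho, ?_⟩
  rw [← Nat.cast_eq_zero (R := ℤ)]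
  exact phi2_eq_phi1_iff h2n hk' hs ho
end

section
/- Let k ≥ 2, n, s, t, o be nonnegative integers with o ≥ 2, n = o/2 + t + s (o even), s ≤ t, and n ≥ k−1. Define φ₂ = 6·(4(n−k+1) + (o+2k)·(t−s)) and φ₃ = 6·(2(n−k+1) + 2kn + (o+2)·(t−s) + (k−1)). Then φ₂ < φ₃. -/
/-! The difference `φ₃ - φ₂` factors as `6 (k - 1) (2 (n - (t - s)) + 3)`, and
`n - (t - s) = o / 2 + 2 s` is nonnegative, so the difference is positive as soon as `k > 1`. -/

theorem phi3_sub_phi2 (k n o d : ℤ) :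
    6 * (2 * (n - k + 1) + 2 * k * n + (o + 2) * d + (k - 1)) -
        6 * (4 * (n - k + 1) + (o + 2 * k) * d) =
      6 * (k - 1) * (2 * (n - d) + 3) := by
  ring

theorem phi2_lt_phi3_general (k n s t o : ℕ) (hk : 2 ≤ k)
    (hn : n = o / 2 + t + s) :
    6 * (4 * ((n : ℤ) - (k : ℤ) + 1) + ((o : ℤ) + 2 * (k : ℤ)) * ((t : ℤ) - (s : ℤ))) <
      6 * (2 * ((n : ℤ) - (k : ℤ) + 1) + 2 * (k : ℤ) * (n : ℤ) +
        ((o : ℤ) + 2) * ((t : ℤ) - (s : ℤ)) + ((k : ℤ) - 1)) := by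
  have hk_pos : (0 : ℤ) < k - 1 := by omega
  have hcut_nonneg : (0 : ℤ) ≤ n - (t - s) := by omega
  rw [← sub_pos, phi3_sub_phi2]
  exact mul_pos (mul_pos (by norm_num) hk_pos) (by omega)

/-- Second comparison of Lemma 3.1(2): `φ₂ < φ₃`. -/
theorem phi2_lt_phi3 (k n s t o : ℕ) (hk : 2 ≤ k) (ho : 2 ≤ o) (hoe : Even o)
    (hn : n = o / 2 + t + s) (hst : s ≤ t) (hnk : (k : ℤ) - 1 ≤ (n : ℤ)) :
    6 * (4 * ((n : ℤ) - (k : ℤ) + 1) + ((o : ℤ) + 2 * (k : ℤ)) * ((t : ℤ) - (s : ℤ))) <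
      6 * (2 * ((n : ℤ) - (k : ℤ) + 1) + 2 * (k : ℤ) * (n : ℤ) +
        ((o : ℤ) + 2) * ((t : ℤ) - (s : ℤ)) + ((k : ℤ) - 1)) :=
  phi2_lt_phi3_general k n s t o hk hn
end

section
/- Let j, k, n be positive integers with 1 ≤ j ≤ k ≤ n, h = j+k+n+1, n ≤ ⌊h/2⌋, h even, and (j,k,n) ≠ (1,1,1). Then 24·(2kj + 3nj + 4kn + k + 2n) > 72·(h/2)² − 24·(h/2) + 24·(h−1). -/
/-!
Write `h = 2m`. Multiplying the claimed inequality by `4/24` and eliminating `m` through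
`2m = j + k + n + 1` turns it into the positivity of a quadratic form in `j, k, n`, which is
concave in `n`; the hypothesis `n ≤ ⌊h/2⌋` reads `n ≤ j + k + 1`, so it suffices to check the
ends `n = max k 2` and `n = j + k + 1` of the admissible range.
-/

theorem quadratic_gap_pos {j k n : ℤ} (hj : 1 ≤ j) (hjk : j ≤ k) (hkn : k ≤ n)
    (hn : n ≤ j + k + 1) (hn2 : 2 ≤ n) :
    0 < 2 * j * k + 6 * n * j + 10 * k * n - 3 * j ^ 2 - 3 * k ^ 2 - 3 * n ^ 2 - 8 * j - 4 * k - 1 := by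
  rcases eq_or_lt_of_le (show 1 ≤ k by omega) with rfl | hk2
  · obtain rfl : j = 1 := by omega
    nlinarith [mul_nonneg (sub_nonneg.2 hn2) (sub_nonneg.2 hn)]
  · -- The form exceeds its chord in `n` by `3 (n - k) (j + k + 1 - n)`; at `n = j + k + 1` it
    -- equals `12jk + 4k² - 8j - 4`.
    nlinarith [mul_nonneg (sub_nonneg.2 hkn) (sub_nonneg.2 hn), mul_le_mul_of_nonneg_left hjk
      (by omega : (0 : ℤ) ≤ j), mul_pos (by omega : (0 : ℤ) < j) (by omega : (0 : ℤ) < k)]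

/-- Subcase 1.1 of Lemma 4.3: for even `h = j+k+n+1` with `n ≤ ⌊h/2⌋` and
`(j,k,n) ≠ (1,1,1)`, `Mo(P_L(j,k,n)) > Mo(C_L(1,h−2))`. -/
theorem lemma43_subcase11 (j k n h : ℕ) (hj : 1 ≤ j) (hjk : j ≤ k) (hkn : k ≤ n)
    (hh : h = j + k + n + 1) (hn : n ≤ h / 2) (heven : Even h)
    (hne : (j, k, n) ≠ (1, 1, 1)) :
    72 * ((h / 2 : ℕ) : ℤ) ^ 2 - 24 * ((h / 2 : ℕ) : ℤ) + 24 * ((h : ℤ) - 1) <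
      24 * (2 * (k : ℤ) * (j : ℤ) + 3 * (n : ℤ) * (j : ℤ) + 4 * (k : ℤ) * (n : ℤ) +
        (k : ℤ) + 2 * (n : ℤ)) := by
  obtain ⟨m, rfl⟩ := heven
  rw [show (m + m) / 2 = m by omega]
  have hn2 : 2 ≤ n := by
    by_contra! hn1
    exact hne (by simp only [Prod.mk.injEq]; omega)
  have hm : (m : ℤ) + m = j + k + n + 1 := by exact_mod_cast hh
  have hgap := quadratic_gap_pos (j := (j : ℤ)) (k := k) (n := n) (by exact_mod_cast hj)
    (by exact_mod_cast hjk) (by exact_mod_cast hkn) (by omega) (by exact_mod_cast hn2)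
  push_cast
  linear_combination 6 * hgap + (18 * (2 * (m : ℤ) + (j + k + n + 1)) + 12) * hm
end

section
/- Let j, k, n be positive integers with 1 ≤ j ≤ k ≤ n, h = j+k+n+1 even, n ≤ ⌊h/2⌋ (i.e., n ≤ j+k+1), and (j,k,n) ∉ {(1,1,1),(1,1,3),(1,2,2)}. Then −3j² − 3k² − 3n² + 2kj + 6jn + 10kn − 8k − 12j − 4n + 7 > 0. -/
/-- Subcase 1.1 of Lemma 5.2: for even `h = j+k+n+1` with `n ≤ j+k+1` and
`(j,k,n) ∉ {(1,1,1),(1,1,3),(1,2,2)}`,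
`−3j² − 3k² − 3n² + 2kj + 6jn + 10kn − 8k − 12j − 4n + 7 > 0`. -/
theorem lemma52_subcase11 (j k n h : ℕ) (hj : 1 ≤ j) (hjk : j ≤ k) (hkn : k ≤ n)
    (hh : h = j + k + n + 1) (heven : Even h) (hn : n ≤ h / 2)
    (h1 : (j, k, n) ≠ (1, 1, 1)) (h2 : (j, k, n) ≠ (1, 1, 3)) (h3 : (j, k, n) ≠ (1, 2, 2)) :
    (0 : ℤ) < -3 * (j : ℤ) ^ 2 - 3 * (k : ℤ) ^ 2 - 3 * (n : ℤ) ^ 2 +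
      2 * (k : ℤ) * (j : ℤ) + 6 * (j : ℤ) * (n : ℤ) + 10 * (k : ℤ) * (n : ℤ) -
      8 * (k : ℤ) - 12 * (j : ℤ) - 4 * (n : ℤ) + 7 := by
  have hpar : h % 2 = 0 := Nat.even_iff.mp heven
  have h1' : ¬(j = 1 ∧ k = 1 ∧ n = 1) := by
    intro ⟨a, b, c⟩; exact h1 (by simp [a, b, c])
  have h2' : ¬(j = 1 ∧ k = 1 ∧ n = 3) := by
    intro ⟨a, b, c⟩; exact h2 (by simp [a, b, c])
  have h3' : ¬(j = 1 ∧ k = 2 ∧ n = 2) := by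
    intro ⟨a, b, c⟩; exact h3 (by simp [a, b, c])
  have hj' : (1 : ℤ) ≤ (j : ℤ) := by exact_mod_cast hj
  have hjk' : (j : ℤ) ≤ (k : ℤ) := by exact_mod_cast hjk
  have hkn' : (k : ℤ) ≤ (n : ℤ) := by exact_mod_cast hkn
  -- from evenness and hn: 2n ≤ j+k+n+1, and j+k+n is odd
  have key : n = j + k + 1 ∨ n + 1 = j + k ∨ n + 3 ≤ j + k := by omega
  rcases key with hc | hc | hc
  · -- n = j+k+1; exclude j=k=1 (would force n=3)
    have hk2 : 2 ≤ k := by omega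
    have hk2' : (2 : ℤ) ≤ (k : ℤ) := by exact_mod_cast hk2
    have hn' : (n : ℤ) = (j : ℤ) + k + 1 := by exact_mod_cast hc
    rw [hn']
    nlinarith [sq_nonneg ((k : ℤ) - j), mul_nonneg (sub_nonneg.mpr hjk') (sub_nonneg.mpr hj')]
  · -- n = j+k-1; exclusions rule out (1,1,1) and (1,2,2)
    have hn' : (n : ℤ) + 1 = (j : ℤ) + k := by exact_mod_cast hc
    by_cases hj1 : j = 1
    · have hk3 : 3 ≤ k := by omega
      have hk3' : (3 : ℤ) ≤ (k : ℤ) := by exact_mod_cast hk3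
      have hj1' : (j : ℤ) = 1 := by exact_mod_cast hj1
      nlinarith [mul_nonneg (by linarith : (0:ℤ) ≤ (k:ℤ) - 2) (by linarith : (0:ℤ) ≤ (k:ℤ) + 1)]
    · have hj2 : 2 ≤ j := by omega
      have hj2' : (2 : ℤ) ≤ (j : ℤ) := by exact_mod_cast hj2
      nlinarith [sq_nonneg ((k : ℤ) - 1),
        mul_nonneg (by linarith : (0:ℤ) ≤ (j:ℤ) - 2) (by linarith : (0:ℤ) ≤ (k:ℤ))]
  · -- n + 3 ≤ j + k, hence j ≥ 3
    have hc' : (n : ℤ) + 3 ≤ (j : ℤ) + k := by exact_mod_cast hc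
    have hj3' : (3 : ℤ) ≤ (j : ℤ) := by
      have : 3 ≤ j := by omega
      exact_mod_cast this
    nlinarith [mul_nonneg (sub_nonneg.mpr hkn') (sub_nonneg.mpr hjk'),
      mul_nonneg (sub_nonneg.mpr hkn') (by linarith : (0:ℤ) ≤ (j:ℤ) + k - 3 - n),
      mul_nonneg (sub_nonneg.mpr hjk') (by linarith : (0:ℤ) ≤ (j:ℤ) + k - 3 - n),
      mul_nonneg (by linarith : (0:ℤ) ≤ (j:ℤ) - 3) (by linarith : (0:ℤ) ≤ (j:ℤ) + k - 3 - n),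
      mul_nonneg (by linarith : (0:ℤ) ≤ (j:ℤ) - 3) (sub_nonneg.mpr hkn'),
      sq_nonneg ((j:ℤ) + k - 3 - n), sq_nonneg ((n:ℤ) - k)]
end
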